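/- Let N ≥ 3 and let u ∈ C²(ℝ^N) be positive and bounded with -Δu = f(u), where f is C¹, f(0) = 0, and f'(s) ≤ 0 on (0,ε). If u(x) → 0 as |x| → ∞, then u(x) ≤ C|x|^{2-N} for |x| ≥ M, for suitable constants C, M > 0. -/

import Mathlib

open Filter Set

/-- Second directional derivative of `u` at `x` in direction `e`. -/
noncomputable def dir2 {E : Type*} [NormedAddCommGroup E] [NormedSpace ℝ E]
    (u : E → ℝ) (e : E) (x : E) : ℝ :=
  deriv (deriv (fun s : ℝ => u (x + s • e))) 0

/-- Laplacian on `ℝ^N`. -/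
noncomputable def lapE {N : ℕ} (u : EuclideanSpace ℝ (Fin N) → ℝ)
    (x : EuclideanSpace ℝ (Fin N)) : ℝ :=
  ∑ i : Fin N, dir2 u (EuclideanSpace.single i 1) x


/-!
Where `u < ε` we have `f u ≤ 0`, so `u` is subharmonic outside a ball of radius `M`. Away from the
origin, `‖x‖ ^ (2 - N)` is harmonic and, since `N ≥ 3`, `‖x‖ ^ (-1/2)` is strictly superharmonic.
Choose `C` with `C * M ^ (2 - N) = sup u`. For `η > 0` the function
`u - C ‖x‖ ^ (2 - N) - η ‖x‖ ^ (-1/2)` is negative on the sphere `‖x‖ = M` and tends to `0` at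
infinity, so a positive value would give an interior maximum, where its Laplacian would be both
`≤ 0` and `> 0`. Letting `η → 0` gives `u ≤ C ‖x‖ ^ (2 - N)`.
-/

open scoped Topology

theorem IsLocalMax.deriv_deriv_nonpos {f : ℝ → ℝ} {a : ℝ} (h : IsLocalMax f a)
    (hc : ContinuousAt f a) : deriv (deriv f) a ≤ 0 := by
  by_contra! hpos
  -- the second derivative test makes `a` a local minimum too, so `f` is locally constant
  have hmin := isLocalMin_of_deriv_deriv_pos hpos h.deriv_eq_zero hc
  have hconst : f =ᶠ[𝓝 a] fun _ => f a := (h.and hmin).mono fun _ hx => le_antisymm hx.1 hx.2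
  have hderiv : deriv f =ᶠ[𝓝 a] fun _ => 0 := hconst.deriv.trans (by simp)
  simp [hderiv.deriv_eq] at hpos

theorem Real.rpow_eq_sq_rpow_half {a : ℝ} (ha : 0 ≤ a) (p : ℝ) : a ^ p = (a ^ 2) ^ (p / 2) := by
  rw [← Real.rpow_natCast_mul ha]
  ring_nf

theorem map_nonpos_of_deriv_nonpos {f : ℝ → ℝ} (hf : Differentiable ℝ f) (hf0 : f 0 = 0) {ε : ℝ}
    (hmono : ∀ s ∈ Ioo 0 ε, deriv f s ≤ 0) {s : ℝ} (hs : s ∈ Icc 0 ε) : f s ≤ 0 := by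
  have hanti := antitoneOn_of_deriv_nonpos (convex_Icc 0 ε) hf.continuous.continuousOn
    hf.differentiableOn (by rwa [interior_Icc])
  simpa [hf0] using hanti (left_mem_Icc.2 (hs.1.trans hs.2)) hs hs.1

theorem exists_pos_forall_le_norm_of_eventually_cocompact {E : Type*} [NormedAddCommGroup E]
    {P : E → Prop} (h : ∀ᶠ x in cocompact E, P x) : ∃ M > 0, ∀ x, M ≤ ‖x‖ → P x := by
  obtain ⟨r, hr⟩ := Metric.closedBall_compl_subset_of_mem_cocompact h 0
  refine ⟨max r 0 + 1, by positivity, fun x hx => hr ?_⟩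
  simp only [mem_compl_iff, Metric.mem_closedBall, dist_zero_right, not_le]
  linarith [le_max_left r 0]

section Directional

variable {E : Type*} [NormedAddCommGroup E] [NormedSpace ℝ E]

theorem ContDiffAt.comp_line {n : WithTop ℕ∞} {u : E → ℝ} {x : E} (hu : ContDiffAt ℝ n u x)
    (e : E) : ContDiffAt ℝ n (fun s : ℝ => u (x + s • e)) 0 :=
  (by simpa using hu : ContDiffAt ℝ n u (x + (0 : ℝ) • e)).comp 0 (by fun_prop)

theorem dir2_eq_iteratedDeriv (u : E → ℝ) (e x : E) :
    dir2 u e x = iteratedDeriv 2 (fun s : ℝ => u (x + s • e)) 0 := by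
  simp [dir2, iteratedDeriv_succ]

theorem dir2_sub {u v : E → ℝ} {x : E} (hu : ContDiffAt ℝ 2 u x) (hv : ContDiffAt ℝ 2 v x)
    (e : E) : dir2 (fun y => u y - v y) e x = dir2 u e x - dir2 v e x := by
  simp only [dir2_eq_iteratedDeriv]
  exact iteratedDeriv_fun_sub (hu.comp_line e) (hv.comp_line e)

theorem dir2_const_mul (c : ℝ) (u : E → ℝ) (e x : E) :
    dir2 (fun y => c * u y) e x = c * dir2 u e x := by
  simp only [dir2_eq_iteratedDeriv]
  exact iteratedDeriv_const_mul_field c _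

theorem IsLocalMax.dir2_nonpos {u : E → ℝ} {x : E} (h : IsLocalMax u x)
    (hc : ContinuousAt u x) (e : E) : dir2 u e x ≤ 0 := by
  have hline : ContinuousAt (fun s : ℝ => x + s • e) 0 := by fun_prop
  have hx : x + (0 : ℝ) • e = x := by simp
  rw [← hx] at h hc
  exact IsLocalMax.deriv_deriv_nonpos (h.comp_continuous (g := fun s : ℝ => x + s • e) hline)
    (hc.comp (f := fun s : ℝ => x + s • e) hline)

end Directional

section Radial

variable {E : Type*} [NormedAddCommGroup E] [InnerProductSpace ℝ E]

theorem dir2_norm_rpow (p : ℝ) {x : E} (hx : x ≠ 0) (e : E) :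
    dir2 (fun y => ‖y‖ ^ p) e x
      = p * (p - 2) * ‖x‖ ^ (p - 4) * inner ℝ x e ^ 2 + p * ‖x‖ ^ (p - 2) * ‖e‖ ^ 2 := by
  set Q : ℝ → ℝ := fun s => ‖x‖ ^ 2 + 2 * inner ℝ x e * s + ‖e‖ ^ 2 * s ^ 2 with hQ_def
  have hQ : ∀ s : ℝ, ‖x + s • e‖ ^ p = Q s ^ (p / 2) := by
    intro s
    rw [Real.rpow_eq_sq_rpow_half (norm_nonneg _), norm_add_sq_real, real_inner_smul_right,
      norm_smul, Real.norm_eq_abs, mul_pow, sq_abs, hQ_def]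
    ring_nf
  have hQ' : ∀ s, HasDerivAt Q (2 * inner ℝ x e + 2 * ‖e‖ ^ 2 * s) s := by
    intro s
    refine (((hasDerivAt_id' s).const_mul (2 * inner ℝ x e)).const_add (‖x‖ ^ 2) |>.add
      ((hasDerivAt_pow 2 s).const_mul (‖e‖ ^ 2))).congr_deriv ?_
    simp only [Nat.cast_ofNat]
    ring
  have hQ0 : Q 0 = ‖x‖ ^ 2 := by simp [hQ_def]
  have hQ0_pos : 0 < Q 0 := by rw [hQ0]; positivity
  have hQ_pos : ∀ᶠ s in 𝓝 0, 0 < Q s := (hQ' 0).continuousAt.eventually (lt_mem_nhds hQ0_pos)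
  have hderiv : deriv (fun s => Q s ^ (p / 2)) =ᶠ[𝓝 0]
      fun s => p / 2 * Q s ^ (p / 2 - 1) * (2 * inner ℝ x e + 2 * ‖e‖ ^ 2 * s) := by
    filter_upwards [hQ_pos] with s hs
    exact ((Real.hasDerivAt_rpow_const (Or.inl hs.ne')).comp s (hQ' s)).deriv
  have hderiv2 : HasDerivAt
      (fun s => p / 2 * Q s ^ (p / 2 - 1) * (2 * inner ℝ x e + 2 * ‖e‖ ^ 2 * s))
      (p / 2 * ((p / 2 - 1) * Q 0 ^ (p / 2 - 1 - 1) * (2 * inner ℝ x e + 2 * ‖e‖ ^ 2 * 0))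
        * (2 * inner ℝ x e + 2 * ‖e‖ ^ 2 * 0) + p / 2 * Q 0 ^ (p / 2 - 1) * (2 * ‖e‖ ^ 2)) 0 := by
    have hlin : HasDerivAt (fun s : ℝ => 2 * inner ℝ x e + 2 * ‖e‖ ^ 2 * s) (2 * ‖e‖ ^ 2) 0 := by
      simpa using ((hasDerivAt_id (0 : ℝ)).const_mul (2 * ‖e‖ ^ 2)).const_add (2 * inner ℝ x e)
    exact (((Real.hasDerivAt_rpow_const (Or.inl hQ0_pos.ne')).comp 0 (hQ' 0)).const_mul _).mul
      hlin
  have hline : (fun s : ℝ => ‖x + s • e‖ ^ p) = fun s => Q s ^ (p / 2) := funext hQ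
  have hpow : ∀ q : ℝ, (‖x‖ ^ 2) ^ (q / 2) = ‖x‖ ^ q := fun q =>
    (Real.rpow_eq_sq_rpow_half (norm_nonneg x) q).symm
  rw [dir2, hline, hderiv.deriv_eq, hderiv2.deriv, hQ0, ← hpow (p - 4), ← hpow (p - 2)]
  ring_nf

theorem contDiffAt_norm_rpow {n : WithTop ℕ∞} (p : ℝ) {x : E} (hx : x ≠ 0) :
    ContDiffAt ℝ n (fun y => ‖y‖ ^ p) x :=
  (contDiffAt_norm ℝ hx).rpow_const_of_ne (norm_ne_zero_iff.2 hx)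

end Radial

theorem tendsto_norm_rpow_cocompact {E : Type*} [NormedAddCommGroup E] [ProperSpace E] {p : ℝ}
    (hp : p < 0) : Tendsto (fun y : E => ‖y‖ ^ p) (cocompact E) (𝓝 0) := by
  have := (tendsto_rpow_neg_atTop (neg_pos.2 hp)).comp (tendsto_norm_cocompact_atTop (E := E))
  simpa [Function.comp_def] using this

section Laplacian

variable {N : ℕ}

theorem lapE_sub {u v : EuclideanSpace ℝ (Fin N) → ℝ} {x : EuclideanSpace ℝ (Fin N)}
    (hu : ContDiffAt ℝ 2 u x) (hv : ContDiffAt ℝ 2 v x) :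
    lapE (fun y => u y - v y) x = lapE u x - lapE v x := by
  simp only [lapE, dir2_sub hu hv, Finset.sum_sub_distrib]

theorem lapE_const_mul (c : ℝ) (u : EuclideanSpace ℝ (Fin N) → ℝ)
    (x : EuclideanSpace ℝ (Fin N)) : lapE (fun y => c * u y) x = c * lapE u x := by
  simp only [lapE, dir2_const_mul, Finset.mul_sum]

theorem IsLocalMax.lapE_nonpos {u : EuclideanSpace ℝ (Fin N) → ℝ}
    {x : EuclideanSpace ℝ (Fin N)} (h : IsLocalMax u x) (hc : ContinuousAt u x) :
    lapE u x ≤ 0 :=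
  Finset.sum_nonpos fun _ _ => h.dir2_nonpos hc _

theorem lapE_norm_rpow (p : ℝ) {x : EuclideanSpace ℝ (Fin N)} (hx : x ≠ 0) :
    lapE (fun y => ‖y‖ ^ p) x = p * (p + N - 2) * ‖x‖ ^ (p - 2) := by
  have hsq : ‖x‖ ^ (p - 2) = ‖x‖ ^ (p - 4) * ‖x‖ ^ 2 := by
    rw [← Real.rpow_natCast, ← Real.rpow_add (norm_pos_iff.2 hx)]
    ring_nf
  simp only [lapE, dir2_norm_rpow p hx, EuclideanSpace.inner_single_right, PiLp.norm_single,
    Finset.sum_add_distrib, ← Finset.mul_sum, Real.ringHom_apply, one_mul, norm_one, one_pow,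
    mul_one, ← EuclideanSpace.real_norm_sq_eq, Finset.sum_const, Finset.card_univ,
    Fintype.card_fin, nsmul_eq_mul, hsq]
  ring

end Laplacian

section MaximumPrinciple

variable {N : ℕ} {M : ℝ}

theorem nonpos_of_lapE_pos_of_tendsto_cocompact {v : EuclideanSpace ℝ (Fin N) → ℝ}
    (hcont : ∀ y, M ≤ ‖y‖ → ContinuousAt v y) (hlap : ∀ y, M < ‖y‖ → 0 < lapE v y)
    (hbdry : ∀ y, ‖y‖ = M → v y ≤ 0) (hdecay : Tendsto v (cocompact _) (𝓝 0))
    {x : EuclideanSpace ℝ (Fin N)} (hx : M ≤ ‖x‖) : v x ≤ 0 := by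
  by_contra! hpos
  have hfar : ∀ᶠ y in cocompact _ ⊓ 𝓟 {y | M ≤ ‖y‖}, v y ≤ v x :=
    (hdecay.eventually (ge_mem_nhds hpos)).filter_mono inf_le_left
  obtain ⟨z, hzM : M ≤ ‖z‖, hzmax⟩ := ContinuousOn.exists_isMaxOn'
    (fun y hy => (hcont y hy).continuousWithinAt) (isClosed_le continuous_const continuous_norm)
    hx hfar
  have hz : M < ‖z‖ := hzM.lt_of_ne fun h => (hbdry z h.symm).not_gt (hpos.trans_le (hzmax hx))
  have hloc : IsLocalMax v z := hzmax.isLocalMax <| mem_of_superset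
    ((isOpen_lt continuous_const continuous_norm).mem_nhds hz)
    fun y (hy : M < ‖y‖) => (hy.le : M ≤ ‖y‖)
  exact (hloc.lapE_nonpos (hcont z hzM)).not_gt (hlap z hz)

theorem le_mul_norm_rpow_of_lapE_nonneg (hN : 3 ≤ N) {C : ℝ} (hM : 0 < M)
    {u : EuclideanSpace ℝ (Fin N) → ℝ} (hu : ∀ y, M ≤ ‖y‖ → ContDiffAt ℝ 2 u y)
    (hlap : ∀ y, M < ‖y‖ → 0 ≤ lapE u y) (hbdry : ∀ y, ‖y‖ = M → u y ≤ C * M ^ ((2 : ℝ) - N))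
    (hdecay : Tendsto u (cocompact _) (𝓝 0)) {x : EuclideanSpace ℝ (Fin N)} (hx : M ≤ ‖x‖) :
    u x ≤ C * ‖x‖ ^ ((2 : ℝ) - N) := by
  have hne : ∀ y : EuclideanSpace ℝ (Fin N), M ≤ ‖y‖ → y ≠ 0 := fun y hy =>
    norm_pos_iff.1 (hM.trans_le hy)
  have hNr : (3 : ℝ) ≤ N := by exact_mod_cast hN
  have hη : ∀ η > 0, u x ≤ C * ‖x‖ ^ ((2 : ℝ) - N) + η * ‖x‖ ^ (-1 / 2 : ℝ) := by
    intro η hη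
    have hv := nonpos_of_lapE_pos_of_tendsto_cocompact
      (v := fun y => u y - C * ‖y‖ ^ ((2 : ℝ) - N) - η * ‖y‖ ^ (-1 / 2 : ℝ)) ?_ ?_ ?_ ?_ hx
    · linarith
    · intro y hy
      exact ((hu y hy).continuousAt.sub
        ((contDiffAt_norm_rpow (n := 0) _ (hne y hy)).continuousAt.const_mul C)).sub
        ((contDiffAt_norm_rpow (n := 0) _ (hne y hy)).continuousAt.const_mul η)
    · intro y hy
      have hy0 := hne y hy.le
      rw [lapE_sub ((hu y hy.le).sub (contDiffAt_const.mul (contDiffAt_norm_rpow _ hy0)))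
          (contDiffAt_const.mul (contDiffAt_norm_rpow _ hy0)),
        lapE_sub (hu y hy.le) (contDiffAt_const.mul (contDiffAt_norm_rpow _ hy0)),
        lapE_const_mul, lapE_const_mul, lapE_norm_rpow _ hy0, lapE_norm_rpow _ hy0]
      have hharm : ((2 : ℝ) - N) * ((2 : ℝ) - N + N - 2) = 0 := by ring
      have hsuper : 0 < η * ((-1 / 2 + N - 2) * ‖y‖ ^ (-1 / 2 - 2 : ℝ)) :=
        mul_pos hη (mul_pos (by linarith) (Real.rpow_pos_of_pos (norm_pos_iff.2 hy0) _))
      rw [hharm, zero_mul, mul_zero, sub_zero]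
      linarith [hlap y hy]
    · intro y hy
      rw [hy]
      linarith [hbdry y hy, mul_pos hη (Real.rpow_pos_of_pos hM (-1 / 2 : ℝ))]
    · simpa using (hdecay.sub ((tendsto_norm_rpow_cocompact (by linarith)).const_mul C)).sub
        ((tendsto_norm_rpow_cocompact (by norm_num)).const_mul η)
  have hlim : Tendsto (fun η => C * ‖x‖ ^ ((2 : ℝ) - N) + η * ‖x‖ ^ (-1 / 2 : ℝ)) (𝓝[>] 0)
      (𝓝 (C * ‖x‖ ^ ((2 : ℝ) - N))) := by
    have := ((tendsto_id (x := 𝓝 (0 : ℝ))).mul_const (‖x‖ ^ (-1 / 2 : ℝ))).const_add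
      (C * ‖x‖ ^ ((2 : ℝ) - N))
    simpa using this.mono_left nhdsWithin_le_nhds
  exact ge_of_tendsto hlim (eventually_nhdsWithin_of_forall hη)

end MaximumPrinciple

/-- A positive bounded solution of `-Δu = f(u)` decaying at infinity satisfies
`u(x) ≤ C |x|^{2-N}` for large `|x|`, `N ≥ 3`. -/
theorem stmt_12 (N : ℕ) (hN : 3 ≤ N)
    (f : ℝ → ℝ) (hf : ContDiff ℝ 1 f) (hf0 : f 0 = 0)
    (ε : ℝ) (hε : 0 < ε) (hmono : ∀ s ∈ Set.Ioo (0:ℝ) ε, deriv f s ≤ 0)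
    (u : EuclideanSpace ℝ (Fin N) → ℝ) (hu : ContDiff ℝ 2 u)
    (hpos : ∀ x, 0 < u x)
    (hbdd : ∃ B : ℝ, ∀ x, u x ≤ B)
    (heq : ∀ x, lapE u x = -f (u x))
    (hdecay : Tendsto u (cocompact (EuclideanSpace ℝ (Fin N))) (nhds 0)) :
    ∃ C M : ℝ, 0 < C ∧ 0 < M ∧
      ∀ x : EuclideanSpace ℝ (Fin N), M ≤ ‖x‖ → u x ≤ C * ‖x‖ ^ ((2:ℝ) - N) := by
  obtain ⟨B, hB⟩ := hbdd
  have hB0 : 0 < B := (hpos 0).trans_le (hB 0)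
  obtain ⟨M, hM, hsmall⟩ :=
    exists_pos_forall_le_norm_of_eventually_cocompact (hdecay.eventually (gt_mem_nhds hε))
  have hMN : 0 < M ^ ((2 : ℝ) - N) := Real.rpow_pos_of_pos hM _
  refine ⟨B / M ^ ((2 : ℝ) - N), M, div_pos hB0 hMN, hM, fun x hx => ?_⟩
  refine le_mul_norm_rpow_of_lapE_nonneg hN hM (fun y _ => hu.contDiffAt) (fun y hy => ?_)
    (fun y _ => ?_) hdecay hx
  · rw [heq, neg_nonneg]
    exact map_nonpos_of_deriv_nonpos (hf.differentiable one_ne_zero) hf0 hmono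
      ⟨(hpos y).le, (hsmall y hy.le).le⟩
  · rw [div_mul_cancel₀ _ hMN.ne']
    exact hB y
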